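/- For every complex number z such that |z − πn| > π/4 for all integers n, one has e^{|Im z|} < 4·|sin z|. -/

import Mathlib

/-!
Write `z = x + iy`, so that `|sin z|² = sin² x + sinh² y`. When `|y| ≥ log 2`, the term `sinh² y`
alone gives `4 |sin z| ≥ 2 (e^{|y|} - e^{-|y|}) > e^{|y|}`. When `|y| < log 2` we have `e^{|y|} < 2`,
and it suffices that `|sin z| > 1/2`. Translating `z` by a multiple of `π` (which only changes the sign
of `sin z`) we may assume `|x| ≤ π/2`; then Jordan's inequality `|sin x| ≥ 2|x|/π` together with
`|sinh y| ≥ |y|` gives `|sin z| ≥ 2|z|/π > 1/2`.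
-/

open Real

namespace Complex

lemma norm_sin_sq (z : ℂ) : ‖sin z‖ ^ 2 = Real.sin z.re ^ 2 + Real.sinh z.im ^ 2 := by
  rw [sin_eq, Complex.sq_norm, normSq_apply]
  simp only [← ofReal_sin, ← ofReal_cos, ← ofReal_sinh, ← ofReal_cosh, add_re, add_im, mul_re,
    mul_im, ofReal_re, ofReal_im, I_re, I_im]
  nlinarith [Real.sin_sq_add_cos_sq z.re, Real.cosh_sq z.im]

lemma norm_sin_sub_int_mul_pi (z : ℂ) (n : ℤ) : ‖sin (z - n * π)‖ = ‖sin z‖ := by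
  simp [sin_antiperiodic.sub_int_mul_eq]

lemma abs_sinh_im_le_norm_sin (z : ℂ) : |Real.sinh z.im| ≤ ‖sin z‖ :=
  abs_le_of_sq_le_sq (by nlinarith [norm_sin_sq z]) (norm_nonneg _)

lemma mul_norm_le_norm_sin {z : ℂ} (hz : |z.re| ≤ π / 2) : 2 / π * ‖z‖ ≤ ‖sin z‖ := by
  have hre : 2 / π * |z.re| ≤ |Real.sin z.re| := mul_abs_le_abs_sin hz
  have him : |z.im| ≤ |Real.sinh z.im| := by
    rw [abs_sinh]; exact self_le_sinh_iff.2 (abs_nonneg _)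
  have hc : 2 / π ≤ 1 := by rw [div_le_one pi_pos]; linarith [pi_gt_three]
  have h1 : (2 / π * |z.re|) ^ 2 ≤ Real.sin z.re ^ 2 := by
    rw [← sq_abs (Real.sin _)]; gcongr
  have h2 : (2 / π * |z.im|) ^ 2 ≤ Real.sinh z.im ^ 2 := by
    rw [← sq_abs (Real.sinh _)]; gcongr
    exact (mul_le_of_le_one_left (abs_nonneg _) hc).trans him
  refine le_of_sq_le_sq ?_ (norm_nonneg _)
  calc (2 / π * ‖z‖) ^ 2 = (2 / π * |z.re|) ^ 2 + (2 / π * |z.im|) ^ 2 := by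
        rw [mul_pow, Complex.sq_norm, normSq_apply]; simp only [mul_pow, sq_abs]; ring
    _ ≤ ‖sin z‖ ^ 2 := by rw [norm_sin_sq]; linarith

lemma exists_abs_re_sub_int_mul_pi_le (z : ℂ) : ∃ n : ℤ, |(z - n * π).re| ≤ π / 2 := by
  refine ⟨round (z.re / π), ?_⟩
  have h := abs_sub_round (z.re / π)
  have hre : (z - round (z.re / π) * π).re = (z.re / π - round (z.re / π)) * π := by
    rw [sub_mul, div_mul_cancel₀ _ pi_ne_zero]; simp
  rw [hre, abs_mul, abs_of_pos pi_pos]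
  nlinarith [pi_pos]

lemma lt_norm_sin_of_forall_lt_norm_sub_int_mul_pi {z : ℂ} {r : ℝ}
    (h : ∀ n : ℤ, r < ‖z - n * π‖) : 2 / π * r < ‖sin z‖ := by
  obtain ⟨n, hn⟩ := exists_abs_re_sub_int_mul_pi_le z
  calc 2 / π * r < 2 / π * ‖z - n * π‖ := by gcongr; exact h n
    _ ≤ ‖sin (z - n * π)‖ := mul_norm_le_norm_sin hn
    _ = ‖sin z‖ := norm_sin_sub_int_mul_pi z n

end Complex

lemma Real.exp_lt_four_mul_sinh {t : ℝ} (ht : log 2 ≤ t) : exp t < 4 * sinh t := by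
  have h2 : 2 ≤ exp t := by rwa [← exp_le_exp, exp_log two_pos] at ht
  have hinv : exp t * exp (-t) = 1 := by rw [← exp_add, add_neg_cancel, exp_zero]
  rw [sinh_eq]
  nlinarith [exp_pos (-t)]

theorem stmt_15 (z : ℂ) (h : ∀ n : ℤ, Real.pi / 4 < ‖z - Real.pi * n‖) :
    Real.exp |z.im| < 4 * ‖Complex.sin z‖ := by
  rcases lt_or_ge |z.im| (log 2) with hy | hy
  · have hsin : 2 / π * (π / 4) < ‖Complex.sin z‖ :=
      Complex.lt_norm_sin_of_forall_lt_norm_sub_int_mul_pi fun n => by simpa [mul_comm] using h n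
    have hexp : exp |z.im| < 2 := by simpa [exp_log two_pos] using exp_lt_exp.2 hy
    field_simp at hsin
    linarith
  · calc exp |z.im| < 4 * sinh |z.im| := exp_lt_four_mul_sinh hy
      _ = 4 * |sinh z.im| := by rw [abs_sinh]
      _ ≤ 4 * ‖Complex.sin z‖ := by gcongr; exact Complex.abs_sinh_im_le_norm_sin z
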